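/- Let (Ω, 𝒜, τ) be a finite measure space and let f : Ω → [0, ∞) be a measurable function. Then f is τ-essentially bounded if and only if for every measurable function h : Ω → [0, ∞) with h > 0 τ-almost everywhere and ∫ h dτ < ∞, and for every real number p ∈ [1, ∞), one has ∫ f^p · h dτ < ∞. -/

import Mathlib

open MeasureTheory ENNReal NNReal

/-!
An essential bound `C` gives `∫ f^p h ≤ C^p ∫ h`. Conversely, if `f` is not essentially bounded,
every set `Sₙ = {2ⁿ < f}` has positive measure, and the weight `h = 1 + ∑ₙ 1_{Sₙ} / (2ⁿ τ(Sₙ))`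
is integrable while `∫ f h ≥ ∑ₙ 1 = ∞`.
-/

section

variable {α : Type*} [MeasurableSpace α] {μ : Measure α}

theorem lintegral_mul_lt_top_of_ae_le {f g : α → ℝ≥0∞} {C : ℝ≥0∞} (hC : C ≠ ∞)
    (hf : ∀ᵐ x ∂μ, f x ≤ C) (hg : ∫⁻ x, g x ∂μ < ∞) : ∫⁻ x, f x * g x ∂μ < ∞ :=
  calc ∫⁻ x, f x * g x ∂μ
      ≤ ∫⁻ x, C * g x ∂μ := lintegral_mono_ae (hf.mono fun _ hx => mul_le_mul_left hx _)
    _ = C * ∫⁻ x, g x ∂μ := lintegral_const_mul' C g hC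
    _ < ∞ := mul_lt_top hC.lt_top hg

theorem lintegral_tsum_indicator_const {S : ℕ → Set α} (hS : ∀ n, MeasurableSet (S n))
    (c : ℕ → ℝ≥0∞) :
    ∫⁻ x, ∑' n, (S n).indicator (fun _ => c n) x ∂μ = ∑' n, c n * μ (S n) := by
  rw [lintegral_tsum fun n => (measurable_const.indicator (hS n)).aemeasurable]
  exact tsum_congr fun n => lintegral_indicator_const (hS n) (c n)

theorem exists_lintegral_lt_top_lintegral_mul_eq_top [IsFiniteMeasure μ] {f : α → ℝ≥0∞}
    (hf : Measurable f) (hunb : ∀ C : ℝ≥0, ¬ ∀ᵐ x ∂μ, f x ≤ C) :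
    ∃ g : α → ℝ≥0∞, Measurable g ∧ (∀ x, 1 ≤ g x) ∧
      ∫⁻ x, g x ∂μ < ∞ ∧ ∫⁻ x, f x * g x ∂μ = ∞ := by
  set S : ℕ → Set α := fun n => {x | 2 ^ n < f x}
  have hS : ∀ n, MeasurableSet (S n) := fun n => measurableSet_lt measurable_const hf
  have hS0 : ∀ n, μ (S n) ≠ 0 := fun n hn =>
    hunb (2 ^ n) (by simpa [S, ae_iff] using hn)
  set c : ℕ → ℝ≥0∞ := fun n => 2⁻¹ ^ n * (μ (S n))⁻¹
  have hc : ∀ n, c n * μ (S n) = 2⁻¹ ^ n := fun n => by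
    rw [mul_assoc, ENNReal.inv_mul_cancel (hS0 n) (measure_ne_top μ _), mul_one]
  refine ⟨fun x => 1 + ∑' n, (S n).indicator (fun _ => c n) x,
    measurable_const.add (.tsum fun n => measurable_const.indicator (hS n)),
    fun _ => le_self_add, ?_, top_unique ?_⟩
  · rw [lintegral_add_left measurable_const, lintegral_one, lintegral_tsum_indicator_const hS]
    simp only [hc]
    exact add_lt_top.mpr ⟨measure_lt_top μ _, tsum_geometric_lt_top.mpr (by norm_num)⟩
  · have hpoint : ∀ x, ∑' n, (S n).indicator (fun _ => 2 ^ n * c n) x ≤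
        f x * (1 + ∑' n, (S n).indicator (fun _ => c n) x) := fun x => by
      rw [mul_add, ← ENNReal.tsum_mul_left]
      refine le_add_left (ENNReal.tsum_le_tsum fun n => ?_)
      by_cases hx : x ∈ S n
      · simp only [Set.indicator_of_mem hx]
        exact mul_le_mul_left (le_of_lt hx) _
      · simp [Set.indicator_of_notMem hx]
    calc ∞ = ∑' n, 2 ^ n * c n * μ (S n) := by
          simp_rw [mul_assoc, hc, ← mul_pow, ENNReal.mul_inv_cancel two_ne_zero ofNat_ne_top, one_pow]
          exact (ENNReal.tsum_const_eq_top_of_ne_zero one_ne_zero).symm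
      _ = ∫⁻ x, ∑' n, (S n).indicator (fun _ => 2 ^ n * c n) x ∂μ :=
          (lintegral_tsum_indicator_const hS _).symm
      _ ≤ _ := lintegral_mono hpoint

end

/-- Let `(Ω, 𝒜, τ)` be a finite measure space and `f : Ω → [0, ∞)` a
measurable function.  Then `f` is `τ`-essentially bounded if and only if for every
measurable `h : Ω → [0, ∞)` with `h > 0` `τ`-a.e. and `∫ h dτ < ∞`, and every real
`p ∈ [1, ∞)`, one has `∫ f^p · h dτ < ∞`. -/
theorem essentially_bounded_iff_all_weighted_Lp
    {Ω : Type*} [MeasurableSpace Ω] (τ : Measure Ω) [IsFiniteMeasure τ]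
    (f : Ω → ℝ≥0) (hf : Measurable f) :
    (∃ C : ℝ≥0, ∀ᵐ ω ∂τ, f ω ≤ C) ↔
      ∀ h : Ω → ℝ≥0, Measurable h → (∀ᵐ ω ∂τ, 0 < h ω) →
        (∫⁻ ω, (h ω : ℝ≥0∞) ∂τ) < ∞ →
        ∀ p : ℝ, 1 ≤ p → (∫⁻ ω, (f ω : ℝ≥0∞) ^ p * (h ω : ℝ≥0∞) ∂τ) < ∞ := by
  constructor
  · rintro ⟨C, hC⟩ h - - hh p hp
    refine lintegral_mul_lt_top_of_ae_le (C := (C : ℝ≥0∞) ^ p)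
      (rpow_ne_top_of_nonneg (by linarith) coe_ne_top) ?_ hh
    filter_upwards [hC] with ω hω
    exact rpow_le_rpow (coe_le_coe.mpr hω) (by linarith)
  · intro H
    by_contra hunb
    obtain ⟨g, hg, hg_one, hg_int, hfg⟩ :=
      exists_lintegral_lt_top_lintegral_mul_eq_top (μ := τ) hf.coe_nnreal_ennreal
        fun C hC => hunb ⟨C, hC.mono fun _ => coe_le_coe.mp⟩
    have hg_fin : ∀ᵐ ω ∂τ, g ω < ∞ := ae_lt_top hg hg_int.ne
    have hg_eq : (fun ω => ((g ω).toNNReal : ℝ≥0∞)) =ᵐ[τ] g :=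
      hg_fin.mono fun ω hω => coe_toNNReal hω.ne
    have hpos : ∀ᵐ ω ∂τ, 0 < (g ω).toNNReal :=
      hg_fin.mono fun ω hω => toNNReal_pos (zero_lt_one.trans_le (hg_one ω)).ne' hω.ne
    have := H _ hg.ennreal_toNNReal hpos (by rwa [lintegral_congr_ae hg_eq]) 1 le_rfl
    simp_rw [ENNReal.rpow_one] at this
    rw [lintegral_congr_ae (hg_eq.mono fun ω hω => congrArg ((f ω : ℝ≥0∞) * ·) hω), hfg] at this
    exact lt_irrefl _ this
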